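/- Let N, W, L be positive integers, g : Z/NZ → C supported in an interval of length W (mod N), and let [a₁,b₁], [a₂,b₂] ⊆ {0,...,N-1} be nonoverlapping intervals such that a₂ - b₁ ≥ W and a₁ - b₂ ≥ W (differences interpreted mod N). If x is supported on [a₁,b₁] and y is supported on [a₂,b₂], then for all m, k: |STFT of (x+y)|(m,k) = |STFT of (x−y)|(m,k), where the STFT is X_g(m,k) = Σ_{n=0}^{N-1} x[n] g[mL-n] e^{-2πi kn/N}. -/

import Mathlib

/-!
In frame `m` the window `g (mL - ·)` is supported on `mL - aW - [0, W)`, a cyclic interval of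
length `W`. The two supports are separated by gaps of at least `W` on both sides of the circle,
so this window meets at most one of them: one of the two STFT summands vanishes in every frame,
and then `‖X + Y‖ = ‖X - Y‖` trivially.
-/

open Complex Finset

/-- The STFT with hop length `L`. -/
noncomputable def stftL (N L : ℕ) [NeZero N] (g x : ZMod N → ℂ) (m : ℕ) (k : ZMod N) : ℂ :=
  ∑ n : ZMod N, x n * g (((m * L : ℕ) : ZMod N) - n) *
    Complex.exp (-2 * (Real.pi : ℂ) * Complex.I * (k.val : ℂ) * (n.val : ℂ) / (N : ℂ))

theorem norm_add_eq_norm_sub_of_eq_zero_or_eq_zero {E : Type*} [SeminormedAddCommGroup E]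
    {a b : E} (h : a = 0 ∨ b = 0) : ‖a + b‖ = ‖a - b‖ := by
  rcases h with rfl | rfl <;> simp

theorem lt_or_lt_of_disjoint_Icc {a₁ b₁ a₂ b₂ t₁ t₂ : ℕ}
    (hdisj : Disjoint (Icc a₁ b₁) (Icc a₂ b₂)) (ht₁ : t₁ ∈ Icc a₁ b₁) (ht₂ : t₂ ∈ Icc a₂ b₂) :
    b₁ < a₂ ∨ b₂ < a₁ := by
  rw [mem_Icc] at ht₁ ht₂
  by_contra! h
  have h₁ : max a₁ a₂ ∈ Icc a₁ b₁ := mem_Icc.mpr ⟨le_max_left _ _, by omega⟩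
  have h₂ : max a₁ a₂ ∈ Icc a₂ b₂ := mem_Icc.mpr ⟨le_max_right _ _, by omega⟩
  exact disjoint_left.mp hdisj h₁ h₂

theorem not_modEq_add_of_lt_of_cyclic_gap {N W a₁ b₁ a₂ b₂ t₁ t₂ j₁ j₂ : ℕ}
    (hb : b₁ < a₂) (hb₂ : b₂ < N)
    (hsep₁ : (W : ℤ) ≤ ((a₂ : ℤ) - b₁) % N) (hsep₂ : (W : ℤ) ≤ ((a₁ : ℤ) - b₂) % N)
    (ht₁ : t₁ ∈ Icc a₁ b₁) (ht₂ : t₂ ∈ Icc a₂ b₂) (hj₁ : j₁ < W) (hj₂ : j₂ < W) :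
    ¬ t₁ + j₁ ≡ t₂ + j₂ [MOD N] := by
  rw [mem_Icc] at ht₁ ht₂
  have gap₁ : ((a₂ : ℤ) - b₁) % N = a₂ - b₁ := Int.emod_eq_of_lt (by omega) (by omega)
  have gap₂ : ((a₁ : ℤ) - b₂) % N = a₁ - b₂ + N := by
    rw [← Int.add_emod_right]
    exact Int.emod_eq_of_lt (by omega) (by omega)
  -- `0 < (t₂ + j₂) - (t₁ + j₁) < N`
  intro h
  have hdvd := Nat.modEq_iff_dvd.mp h
  push_cast at hdvd
  have := Int.le_of_dvd (by omega) hdvd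
  omega

theorem not_modEq_add_of_disjoint_Icc {N W a₁ b₁ a₂ b₂ t₁ t₂ j₁ j₂ : ℕ}
    (hb₁ : b₁ < N) (hb₂ : b₂ < N) (hdisj : Disjoint (Icc a₁ b₁) (Icc a₂ b₂))
    (hsep₁ : (W : ℤ) ≤ ((a₂ : ℤ) - b₁) % N) (hsep₂ : (W : ℤ) ≤ ((a₁ : ℤ) - b₂) % N)
    (ht₁ : t₁ ∈ Icc a₁ b₁) (ht₂ : t₂ ∈ Icc a₂ b₂) (hj₁ : j₁ < W) (hj₂ : j₂ < W) :
    ¬ t₁ + j₁ ≡ t₂ + j₂ [MOD N] := by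
  rcases lt_or_lt_of_disjoint_Icc hdisj ht₁ ht₂ with hb | hb
  · exact not_modEq_add_of_lt_of_cyclic_gap hb hb₂ hsep₁ hsep₂ ht₁ ht₂ hj₁ hj₂
  · exact fun h => not_modEq_add_of_lt_of_cyclic_gap hb hb₁ hsep₂ hsep₁ ht₂ ht₁ hj₂ hj₁ h.symm

section STFT

variable {N : ℕ} [NeZero N] {L : ℕ} {g : ZMod N → ℂ} {m : ℕ} {k : ZMod N}

theorem stftL_add (x y : ZMod N → ℂ) :
    stftL N L g (fun n => x n + y n) m k = stftL N L g x m k + stftL N L g y m k := by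
  simp only [stftL, add_mul, sum_add_distrib]

theorem stftL_sub (x y : ZMod N → ℂ) :
    stftL N L g (fun n => x n - y n) m k = stftL N L g x m k - stftL N L g y m k := by
  simp only [stftL, sub_mul, sum_sub_distrib]

theorem exists_ne_zero_of_stftL_ne_zero {x : ZMod N → ℂ} (h : stftL N L g x m k ≠ 0) :
    ∃ n, x n ≠ 0 ∧ g (((m * L : ℕ) : ZMod N) - n) ≠ 0 := by
  obtain ⟨n, -, hn⟩ := exists_ne_zero_of_sum_ne_zero h
  obtain ⟨hxn, hgn⟩ := mul_ne_zero_iff.mp (left_ne_zero_of_mul hn)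
  exact ⟨n, hxn, hgn⟩

theorem exists_frame_offset_of_stftL_ne_zero {W a b : ℕ} {aW : ZMod N} {x : ZMod N → ℂ}
    (hg : ∀ n : ZMod N, g n ≠ 0 → ∃ j : ℕ, j < W ∧ n = aW + (j : ZMod N))
    (hx : ∀ n : ZMod N, x n ≠ 0 → ∃ t : ℕ, a ≤ t ∧ t ≤ b ∧ n = (t : ZMod N))
    (h : stftL N L g x m k ≠ 0) :
    ∃ t ∈ Icc a b, ∃ j < W, ((m * L : ℕ) : ZMod N) - aW = ((t + j : ℕ) : ZMod N) := by
  obtain ⟨n, hxn, hgn⟩ := exists_ne_zero_of_stftL_ne_zero h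
  obtain ⟨t, hat, htb, rfl⟩ := hx n hxn
  obtain ⟨j, hj, hwin⟩ := hg _ hgn
  refine ⟨t, mem_Icc.mpr ⟨hat, htb⟩, j, hj, ?_⟩
  rw [Nat.cast_add]
  linear_combination hwin

end STFT

theorem stft_magnitude_sign_ambiguity_general (N W L : ℕ) [NeZero N]
    (aW : ZMod N) (g : ZMod N → ℂ)
    (hsupp : ∀ n : ZMod N, g n ≠ 0 → ∃ j : ℕ, j < W ∧ n = aW + (j : ZMod N))
    (a₁ b₁ a₂ b₂ : ℕ) (h₁' : b₁ ≤ N - 1) (h₂' : b₂ ≤ N - 1)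
    (hdisj : Disjoint (Finset.Icc a₁ b₁) (Finset.Icc a₂ b₂))
    (hsep₁ : (W : ℤ) ≤ ((a₂ : ℤ) - (b₁ : ℤ)) % (N : ℤ))
    (hsep₂ : (W : ℤ) ≤ ((a₁ : ℤ) - (b₂ : ℤ)) % (N : ℤ))
    (x y : ZMod N → ℂ)
    (hx : ∀ n : ZMod N, x n ≠ 0 → ∃ t : ℕ, a₁ ≤ t ∧ t ≤ b₁ ∧ n = (t : ZMod N))
    (hy : ∀ n : ZMod N, y n ≠ 0 → ∃ t : ℕ, a₂ ≤ t ∧ t ≤ b₂ ∧ n = (t : ZMod N)) :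
    ∀ (m : ℕ) (k : ZMod N),
      ‖stftL N L g (fun n => x n + y n) m k‖ = ‖stftL N L g (fun n => x n - y n) m k‖ := by
  intro m k
  rw [stftL_add, stftL_sub]
  apply norm_add_eq_norm_sub_of_eq_zero_or_eq_zero
  by_contra! hXY
  obtain ⟨t₁, ht₁, j₁, hj₁, hframe₁⟩ := exists_frame_offset_of_stftL_ne_zero hsupp hx hXY.1
  obtain ⟨t₂, ht₂, j₂, hj₂, hframe₂⟩ := exists_frame_offset_of_stftL_ne_zero hsupp hy hXY.2
  have hN := NeZero.pos N
  exact not_modEq_add_of_disjoint_Icc (by omega) (by omega) hdisj hsep₁ hsep₂ ht₁ ht₂ hj₁ hj₂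
    ((ZMod.natCast_eq_natCast_iff _ _ _).mp (hframe₁.symm.trans hframe₂))

/-- Fundamental sparse ambiguity: if `x` and `y` are supported on two nonoverlapping intervals
of `{0,...,N-1}` whose circular separations are at least the window length `W`, then `x + y`
and `x - y` have the same STFT magnitudes, for any hop length `L`. -/
theorem stft_magnitude_sign_ambiguity (N W L : ℕ) (hN : 0 < N) [NeZero N] (hW : 0 < W)
    (hL : 0 < L) (aW : ZMod N) (g : ZMod N → ℂ)
    (hsupp : ∀ n : ZMod N, g n ≠ 0 → ∃ j : ℕ, j < W ∧ n = aW + (j : ZMod N))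
    (a₁ b₁ a₂ b₂ : ℕ) (h₁ : a₁ ≤ b₁) (h₁' : b₁ ≤ N - 1) (h₂ : a₂ ≤ b₂) (h₂' : b₂ ≤ N - 1)
    (hdisj : Disjoint (Finset.Icc a₁ b₁) (Finset.Icc a₂ b₂))
    (hsep₁ : (W : ℤ) ≤ ((a₂ : ℤ) - (b₁ : ℤ)) % (N : ℤ))
    (hsep₂ : (W : ℤ) ≤ ((a₁ : ℤ) - (b₂ : ℤ)) % (N : ℤ))
    (x y : ZMod N → ℂ)
    (hx : ∀ n : ZMod N, x n ≠ 0 → ∃ t : ℕ, a₁ ≤ t ∧ t ≤ b₁ ∧ n = (t : ZMod N))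
    (hy : ∀ n : ZMod N, y n ≠ 0 → ∃ t : ℕ, a₂ ≤ t ∧ t ≤ b₂ ∧ n = (t : ZMod N)) :
    ∀ (m : ℕ) (k : ZMod N),
      ‖stftL N L g (fun n => x n + y n) m k‖ = ‖stftL N L g (fun n => x n - y n) m k‖ :=
  stft_magnitude_sign_ambiguity_general N W L aW g hsupp a₁ b₁ a₂ b₂ h₁' h₂' hdisj hsep₁ hsep₂ x y
    hx hy
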